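/- arXiv:2510.20064 — 2 statements merged into one kernel-verified Lean document; each statement's English description precedes it below -/
import Mathlib

section
/- Single-step speculative sampling is lossless: if X ~ q is accepted with probability min(1, p(X)/q(X)), and upon rejection a fresh token is drawn from the residual distribution p_res(x) proportional to max(0, p(x) - q(x)), then the output token is distributed exactly according to p. Formally, for every x in V: min(p(x), q(x)) + (1 - beta) * p_res(x) = p(x), where beta = sum_y min(p(y), q(y)). -/
open Finset

theorem min_add_max_zero_sub {α : Type*} [AddCommGroup α] [LinearOrder α] [IsOrderedAddMonoid α]
    (a b : α) : min a b + max 0 (a - b) = a := by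
  rcases le_total a b with hab | hba
  · rw [min_eq_left hab, max_eq_left (sub_nonpos.mpr hab), add_zero]
  · rw [min_eq_right hba, max_eq_right (sub_nonneg.mpr hba), add_sub_cancel]

theorem eq_of_sum_min_eq_sum {ι M : Type*} [Fintype ι] [AddCommMonoid M] [LinearOrder M]
    [IsOrderedCancelAddMonoid M] {f g : ι → M} (hfg : ∑ i, f i = ∑ i, g i)
    (hmin : ∑ i, min (f i) (g i) = ∑ i, f i) : f = g := by
  have hf := (sum_eq_sum_iff_of_le fun i _ ↦ min_le_left (f i) (g i)).mp hmin
  have hg := (sum_eq_sum_iff_of_le fun i _ ↦ min_le_right (f i) (g i)).mp (hmin.trans hfg)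
  funext i
  rw [← hf i (mem_univ i), hg i (mem_univ i)]

theorem speculative_sampling_lossless_general {V : Type*} [Fintype V]
    (p q : V → ℝ)
    (hp : ∑ x, p x = 1) (hq : ∑ x, q x = 1)
    (hne : p ≠ q) :
    ∀ x, min (p x) (q x) +
        (1 - ∑ y, min (p y) (q y)) *
          (max 0 (p x - q x) / (1 - ∑ y, min (p y) (q y))) = p x := by
  -- The rejection probability `1 - β` is nonzero, so the division defining `p_res` is not junk.
  have hrej : 1 - ∑ y, min (p y) (q y) ≠ 0 := fun h ↦
    hne (eq_of_sum_min_eq_sum (hp.trans hq.symm) ((sub_eq_zero.mp h).symm.trans hp.symm))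
  intro x
  rw [mul_div_cancel₀ _ hrej, min_add_max_zero_sub]

theorem speculative_sampling_lossless {V : Type*} [Fintype V]
    (p q : V → ℝ)
    (hp0 : ∀ x, 0 ≤ p x) (hq0 : ∀ x, 0 < q x)
    (hp : ∑ x, p x = 1) (hq : ∑ x, q x = 1)
    (hne : p ≠ q) :
    ∀ x, min (p x) (q x) +
        (1 - ∑ y, min (p y) (q y)) *
          (max 0 (p x - q x) / (1 - ∑ y, min (p y) (q y))) = p x :=
  speculative_sampling_lossless_general p q hp hq hne
end

section
/- Hedge regret bound: for the exponential weights algorithm with learning rate eta = sqrt(8 ln N / T) run on N experts over T rounds with loss vectors f_t in [0,1]^N, the expected cumulative loss satisfies sum_{t=1}^T <p_t, f_t> - min_{i} sum_{t=1}^T f_t[i] <= sqrt((T/2) * ln N), where p_t are the Hedge weight distributions. -/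
/-!
Hedge is analysed through the potential `Φ t = ∑ i, exp (-η Lₜ(i))`, where `Lₜ(i)` is the
cumulative loss of expert `i` before round `t`. Since `Φ (t + 1) / Φ t` is the moment
generating function of the loss `f t` under `p t`, Hoeffding's lemma gives
`log Φ (t + 1) ≤ log Φ t - η ⟪p t, f t⟫ + η² / 8`.
Telescoping from `Φ 0 = N` and comparing with
`Φ T ≥ exp (-η L_T(i))` bounds the regret by `log N / η + T η / 8`, which the choice
`η = √(8 log N / T)` turns into `√(T log N / 2)`.
-/

open Real Finset MeasureTheory ProbabilityTheory

theorem sum_mul_exp_le_of_mem_Icc {ι : Type*} [Fintype ι] {p x : ι → ℝ} {a b : ℝ}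
    (hp : ∀ i, 0 ≤ p i) (hp₁ : ∑ i, p i = 1) (hx : ∀ i, x i ∈ Set.Icc a b) (s : ℝ) :
    ∑ i, p i * exp (s * x i) ≤ exp (s * ∑ i, p i * x i + (b - a) ^ 2 * s ^ 2 / 8) := by
  let _ : MeasurableSpace ι := ⊤
  have : DiscreteMeasurableSpace ι := ⟨fun _ => trivial⟩
  let μ := (PMF.ofFintype (fun i => ENNReal.ofReal (p i))
    (by rw [← ENNReal.ofReal_sum_of_nonneg fun i _ => hp i, hp₁, ENNReal.ofReal_one])).toMeasure
  have integral_μ (g : ι → ℝ) : ∫ i, g i ∂μ = ∑ i, p i * g i := by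
    simp [μ, PMF.integral_eq_sum, ENNReal.toReal_ofReal (hp _)]
  have hoeffding := (hasSubgaussianMGF_of_mem_Icc (μ := μ) (X := x)
    Measurable.of_discrete.aemeasurable (ae_of_all _ hx)).mgf_le s
  simp only [mgf, integral_μ] at hoeffding
  set m := ∑ i, p i * x i
  have hc : (((‖b - a‖₊ / 2) ^ 2 : NNReal) : ℝ) * s ^ 2 / 2 = (b - a) ^ 2 * s ^ 2 / 8 := by
    push_cast; rw [Real.norm_eq_abs, div_pow, sq_abs]; ring
  have hshift :
      ∑ i, p i * exp (s * (x i - m)) = (∑ i, p i * exp (s * x i)) * exp (-(s * m)) := by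
    rw [Finset.sum_mul]; congr! 1 with i; rw [mul_sub, sub_eq_add_neg, exp_add, mul_assoc]
  rw [hc, hshift] at hoeffding
  calc ∑ i, p i * exp (s * x i)
        = (∑ i, p i * exp (s * x i)) * exp (-(s * m)) * exp (s * m) := by
        rw [mul_assoc, ← exp_add, neg_add_cancel, exp_zero, mul_one]
    _ ≤ exp ((b - a) ^ 2 * s ^ 2 / 8) * exp (s * m) := by gcongr
    _ = _ := by rw [← exp_add, add_comm]

noncomputable section

namespace Hedge

variable {ι : Type*} (η : ℝ) (f : ℕ → ι → ℝ)

def weight (t : ℕ) (i : ι) : ℝ := exp (-η * ∑ s ∈ range t, f s i)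

theorem weight_pos (t : ℕ) (i : ι) : 0 < weight η f t i := exp_pos _

theorem weight_succ (t : ℕ) (i : ι) :
    weight η f (t + 1) i = weight η f t i * exp (-η * f t i) := by
  rw [weight, weight, ← exp_add, sum_range_succ, mul_add]

variable [Fintype ι]

def potential (t : ℕ) : ℝ := ∑ i, weight η f t i

def prob (t : ℕ) (i : ι) : ℝ := weight η f t i / potential η f t

theorem potential_zero : potential η f 0 = Fintype.card ι := by
  simp [potential, weight]

theorem neg_mul_sum_le_log_potential (T : ℕ) (i : ι) :
    -η * ∑ t ∈ range T, f t i ≤ log (potential η f T) := by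
  rw [← log_exp (-η * _)]
  exact log_le_log (weight_pos η f T i)
    (single_le_sum (fun j _ => (weight_pos η f T j).le) (mem_univ i))

variable [Nonempty ι]

theorem potential_pos (t : ℕ) : 0 < potential η f t :=
  sum_pos (fun i _ => weight_pos η f t i) univ_nonempty

theorem prob_nonneg (t : ℕ) (i : ι) : 0 ≤ prob η f t i :=
  div_nonneg (weight_pos η f t i).le (potential_pos η f t).le

theorem sum_prob (t : ℕ) : ∑ i, prob η f t i = 1 := by
  simp only [prob, ← sum_div]
  exact div_self (potential_pos η f t).ne'

theorem potential_succ (t : ℕ) :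
    potential η f (t + 1) = potential η f t * ∑ i, prob η f t i * exp (-η * f t i) := by
  rw [mul_sum]
  refine sum_congr rfl fun i _ => ?_
  rw [weight_succ, prob, ← mul_assoc, mul_div_cancel₀ _ (potential_pos η f t).ne']

theorem log_potential_succ_le (t : ℕ) (hf : ∀ i, f t i ∈ Set.Icc 0 1) :
    log (potential η f (t + 1)) ≤
      log (potential η f t) - η * ∑ i, prob η f t i * f t i + η ^ 2 / 8 := by
  have hoeffding := sum_mul_exp_le_of_mem_Icc (prob_nonneg η f t) (sum_prob η f t) hf (-η)
  rw [sub_zero, one_pow, one_mul, neg_sq, neg_mul] at hoeffding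
  have hP := potential_pos η f t
  have hΦ : potential η f (t + 1) ≤
      potential η f t * exp (-(η * ∑ i, prob η f t i * f t i) + η ^ 2 / 8) := by
    rw [potential_succ]
    exact mul_le_mul_of_nonneg_left hoeffding hP.le
  calc log (potential η f (t + 1))
      ≤ log (potential η f t * exp (-(η * ∑ i, prob η f t i * f t i) + η ^ 2 / 8)) :=
        log_le_log (potential_pos η f _) hΦ
    _ = _ := by rw [log_mul hP.ne' (exp_pos _).ne', log_exp]; ring

theorem log_potential_le (hf : ∀ t i, f t i ∈ Set.Icc 0 1) (T : ℕ) :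
    log (potential η f T) ≤ log (Fintype.card ι) -
      η * ∑ t ∈ range T, ∑ i, prob η f t i * f t i + T * η ^ 2 / 8 := by
  induction T with
  | zero => simp [potential_zero]
  | succ T ih =>
    have := log_potential_succ_le η f T (hf T)
    rw [sum_range_succ]; push_cast; linarith

theorem regret_le (hη : 0 < η) (hf : ∀ t i, f t i ∈ Set.Icc 0 1) (T : ℕ) (i : ι) :
    ∑ t ∈ range T, ∑ i, prob η f t i * f t i - ∑ t ∈ range T, f t i ≤
      log (Fintype.card ι) / η + T * η / 8 := by
  have upper := log_potential_le η f hf T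
  have lower := neg_mul_sum_le_log_potential η f T i
  calc _ ≤ (log (Fintype.card ι) + T * η ^ 2 / 8) / η := by
        rw [le_div_iff₀' hη]; linarith
    _ = _ := by field_simp

end Hedge

end

theorem div_add_mul_div_eight_eq_sqrt {a b η : ℝ} (ha : 0 < a) (hb : 0 < b)
    (hη : η = sqrt (8 * a / b)) : a / η + b * η / 8 = sqrt (b / 2 * a) := by
  have hη₀ : 0 < η := hη ▸ sqrt_pos.2 (by positivity)
  have hη₂ : η ^ 2 = 8 * a / b := hη ▸ sq_sqrt (by positivity)
  rw [eq_comm, sqrt_eq_iff_mul_self_eq_of_pos (by positivity)]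
  field_simp
  rw [hη₂]
  field_simp
  ring

/-- Hedge (exponential weights) regret bound with learning rate
`η = √(8 ln N / T)`. -/
theorem hedge_regret (N T : ℕ) (hN : 0 < N)
    (f : ℕ → Fin N → ℝ) (hf : ∀ t i, f t i ∈ Set.Icc (0:ℝ) 1)
    (η : ℝ) (hη : η = Real.sqrt (8 * Real.log N / T))
    (w p : ℕ → Fin N → ℝ)
    (hw : ∀ t i, w t i = Real.exp (-η * ∑ s ∈ Finset.range t, f s i))
    (hp : ∀ t i, p t i = w t i / ∑ j, w t j) :
    ∑ t ∈ Finset.range T, ∑ i, p t i * f t i -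
        Finset.univ.inf' (Finset.univ_nonempty_iff.mpr (Fin.pos_iff_nonempty.mp hN))
          (fun i => ∑ t ∈ Finset.range T, f t i) ≤
      Real.sqrt ((T / 2) * Real.log N) := by
  obtain rfl : w = Hedge.weight η f := funext₂ hw
  obtain rfl : p = Hedge.prob η f := funext₂ hp
  have : Nonempty (Fin N) := Fin.pos_iff_nonempty.mp hN
  obtain ⟨i₀, -, hi₀⟩ := exists_mem_eq_inf' univ_nonempty fun i => ∑ t ∈ range T, f t i
  rw [hi₀]
  -- for `T = 0` and for `N = 1` the learning rate is `0`, and the regret vanishes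
  obtain rfl | hT := Nat.eq_zero_or_pos T
  · simp
  obtain rfl | hN₁ := (show N = 1 ∨ 1 < N by omega)
  · have hprob (t : ℕ) : Hedge.prob η f t 0 = 1 := by
      simpa using Hedge.sum_prob η f t
    simp [Subsingleton.elim i₀ 0, hprob]
  have hlog : 0 < log N := log_pos (by exact_mod_cast hN₁)
  have hη₀ : 0 < η := hη ▸ sqrt_pos.2 (by positivity)
  calc _ ≤ log (Fintype.card (Fin N)) / η + T * η / 8 := Hedge.regret_le η f hη₀ hf T i₀
    _ = _ := by
      rw [Fintype.card_fin]
      exact div_add_mul_div_eight_eq_sqrt hlog (by positivity) hη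
end
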